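/- Let d ≥ 1 and let B₁ = B(x₁, r₁) and B₂ = B(x₂, r₂) be closed balls in ℝ^d with r₁, r₂ > 0. If r₃ ≥ 0 satisfies 2·r₃ ≤ min(r₁ + r₂ − |x₁ − x₂|, r₁, r₂), then there exists a point x₃ ∈ ℝ^d such that the closed ball B(x₃, r₃) is contained in B₁ ∩ B₂. -/

import Mathlib

open Metric

/-- Shrinking both radii by `r` leaves balls that still meet, at some `y`; then `closedBall y r`
fits in both original balls. -/
theorem exists_closedBall_subset_inter_closedBall {E : Type*} [SeminormedAddCommGroup E]
    [NormedSpace ℝ E] {x₁ x₂ : E} {r₁ r₂ r : ℝ} (h₁ : r ≤ r₁) (h₂ : r ≤ r₂)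
    (h : dist x₁ x₂ + 2 * r ≤ r₁ + r₂) :
    ∃ y : E, closedBall y r ⊆ closedBall x₁ r₁ ∩ closedBall x₂ r₂ := by
  obtain ⟨y, hy₁, hy₂⟩ := exists_dist_le_le (x := x₁) (z := x₂) (δ := r₁ - r) (ε := r₂ - r)
    (by linarith) (by linarith) (by linarith)
  refine ⟨y, Set.subset_inter (closedBall_subset_closedBall' ?_)
    (closedBall_subset_closedBall' ?_)⟩
  · rw [dist_comm]
    linarith
  · linarith

theorem exists_ball_subset_inter (d : ℕ)
    (x₁ x₂ : EuclideanSpace ℝ (Fin d)) (r₁ r₂ r₃ : ℝ)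
    (h₃ : 0 ≤ r₃)
    (h : 2 * r₃ ≤ min (r₁ + r₂ - dist x₁ x₂) (min r₁ r₂)) :
    ∃ x₃ : EuclideanSpace ℝ (Fin d),
      closedBall x₃ r₃ ⊆ closedBall x₁ r₁ ∩ closedBall x₂ r₂ := by
  obtain ⟨hsum, hr₁, hr₂⟩ : 2 * r₃ ≤ r₁ + r₂ - dist x₁ x₂ ∧ 2 * r₃ ≤ r₁ ∧ 2 * r₃ ≤ r₂ := by
    simpa only [le_min_iff] using h
  exact exists_closedBall_subset_inter_closedBall (by linarith) (by linarith) (by linarith)
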